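/- Let C be a complete ∞-category and Ab(C) its ∞-category of abelian group objects. Let G ∈ Ab(C) be such that (1) the underlying object of G is cocompact in C, i.e. Map_C(−, G) sends filtered limits to filtered colimits, and (2) G is truncated in C, i.e. there exists n such that Map_C(E, G) is n-truncated for all E ∈ C. Then G is cocompact as an object of Ab(C). -/

import Mathlib

/-!
STATEMENT 15.  Let `C` be a complete ∞-category and `Ab(C)` its ∞-category of abelian group
objects, i.e. the full sub-∞-category of functors `T^op → C` sending finite sums to finite
products, where `T` is the algebraic theory of abelian groups (the opposite of the category of
finitely generated free abelian groups).  Let `G ∈ Ab(C)` be such that (1) the underlying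
object of `G` is cocompact in `C` (`Map_C(−, G)` sends filtered limits to filtered colimits)
and (2) `G` is truncated in `C`.  Then `G` is cocompact as an object of `Ab(C)`.

In this 1-categorical model, mapping spaces are sets, hence automatically `0`-truncated, so
hypothesis (2) holds automatically and is omitted.  Cocompactness of `G` in a category `D` is
expressed by: for every cofiltered limit in `D`, the canonical cocone on the filtered diagram
of hom-sets into `G`, with point `Hom(lim F, G)`, is a colimit cocone.
-/

open CategoryTheory Limits Opposite

universe w v u

/-- The algebraic theory of abelian groups: finitely generated free abelian groups
(a skeleton thereof), i.e. the groups isomorphic to some `Fin n → ℤ`. -/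
abbrev FreeAbFG : Type 1 :=
  ObjectProperty.FullSubcategory (fun G : AddCommGrpCat.{0} => ∃ n : ℕ, Nonempty (G ≅ AddCommGrpCat.of (Fin n → ℤ)))

/-- The rank one free abelian group, so that evaluation at it gives the underlying object
of an abelian group object. -/
def rankOne : FreeAbFG :=
  ⟨AddCommGrpCat.of (Fin 1 → ℤ), 1, ⟨Iso.refl _⟩⟩

/-- The category `Ab(C)` of abelian group objects of `C`: functors `T^op ⥤ C` sending the
finite sums of `T` to finite products, i.e. preserving the finite products of `T^op`. -/
abbrev AbObj (C : Type u) [Category.{v} C] : Type (max u v 1) :=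
  ObjectProperty.FullSubcategory (fun F : FreeAbFGᵒᵖ ⥤ C => Nonempty (PreservesFiniteProducts F))

/-- The canonical cocone on the diagram `j ↦ Hom_D(F j, G)` with point `Hom_D(lim F, G)`. -/
noncomputable def homCocone {D : Type u} [Category.{v} D] {J : Type w} [SmallCategory J]
    (F : J ⥤ D) [HasLimit F] (G : D) : Cocone (F.op ⋙ yoneda.obj G) where
  pt := limit F ⟶ G
  ι :=
    { app := fun j => TypeCat.ofHom (fun φ => limit.π F j.unop ≫ φ)
      naturality := by
        intro j j' f
        ext φ
        simp }

/-- An object `G` of a category `D` is cocompact if `Map_D(−, G)` sends (co)filtered limits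
to filtered colimits: for every cofiltered diagram `F` admitting a limit, the canonical
cocone `colim_j Hom(F j, G) → Hom(lim F, G)` is colimiting. -/
def IsCocompact {D : Type u} [Category.{v} D] (G : D) : Prop :=
  ∀ (J : Type w) (_ : SmallCategory J) (_ : IsCofiltered J) (F : J ⥤ D) (_ : HasLimit F),
    Nonempty (IsColimit (homCocone F G))

/-!
A morphism of abelian group objects `X ⟶ G` is the same as a morphism `ψ : X(ℤ) ⟶ G(ℤ)` of
underlying objects satisfying one equation between maps `X(ℤ²) ⟶ G(ℤ)`: compatibility with
subtraction, which generates the theory of abelian groups. Limits in `Ab(C)` are computed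
objectwise, so for a cofiltered diagram `F` a morphism `φ : lim F ⟶ G` has an underlying
morphism which, by cocompactness of `G(ℤ)`, factors through some `F j (ℤ)`. The subtraction
equation for the factorization holds after composing with the projection from
`(lim F)(ℤ²) = lim F j (ℤ²)`, so by cocompactness again it holds at a later stage `j'`, where
the factorization is therefore a morphism of abelian group objects. Injectivity is checked
on underlying objects in the same way.
-/

namespace FreeAbFG

def free (n : ℕ) : FreeAbFG :=
  ⟨AddCommGrpCat.of (Fin n → ℤ), n, ⟨Iso.refl _⟩⟩

noncomputable def stdBasis (n : ℕ) : Module.Basis (Fin n) ℤ (free n).obj :=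
  Pi.basisFun ℤ (Fin n)

noncomputable def rank (A : FreeAbFG) : ℕ := A.property.choose

noncomputable def basis (A : FreeAbFG) : Module.Basis (Fin A.rank) ℤ A.obj :=
  (stdBasis A.rank).map
    (Iso.addCommGroupIsoToAddEquiv A.property.choose_spec.some).symm.toIntLinearEquiv

noncomputable def rankOneBasis : Module.Basis (Fin 1) ℤ rankOne.obj :=
  Pi.basisFun ℤ (Fin 1)

noncomputable abbrev generator : rankOne.obj := rankOneBasis 0

variable {A B : FreeAbFG} {ι : Type*}

noncomputable def lift (b : Module.Basis ι ℤ A.obj) (f : ι → B.obj) : A ⟶ B :=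
  ObjectProperty.homMk (AddCommGrpCat.ofHom (b.constr ℤ f).toAddMonoidHom)

@[simp]
lemma lift_apply (b : Module.Basis ι ℤ A.obj) (f : ι → B.obj) (i : ι) :
    (lift b f).hom (b i) = f i :=
  b.constr_basis ℤ f i

lemma hom_ext_basis (b : Module.Basis ι ℤ A.obj) {u v : A ⟶ B}
    (h : ∀ i, u.hom (b i) = v.hom (b i)) : u = v := by
  ext : 1
  apply AddCommGrpCat.hom_ext
  exact congrArg LinearMap.toAddMonoidHom
    (b.ext (f₁ := u.hom.hom.toIntLinearMap) (f₂ := v.hom.hom.toIntLinearMap) h)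

noncomputable def ofElem (a : A.obj) : rankOne ⟶ A := lift rankOneBasis fun _ => a

@[simp]
lemma ofElem_apply_generator (a : A.obj) : (ofElem a).hom generator = a :=
  lift_apply _ _ _

lemma eq_ofElem (u : rankOne ⟶ A) : u = ofElem (u.hom generator) :=
  hom_ext_basis rankOneBasis fun i => by rw [Subsingleton.elim i 0, ofElem_apply_generator]

@[simp]
lemma ofElem_generator : ofElem generator = 𝟙 rankOne :=
  (eq_ofElem (𝟙 rankOne)).symm

@[simp]
lemma ofElem_comp (a : A.obj) (u : A ⟶ B) : ofElem a ≫ u = ofElem (u.hom a) := by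
  rw [eq_ofElem (ofElem a ≫ u)]
  simp

noncomputable def isColimitCofanOfBasis (b : Module.Basis ι ℤ A.obj) :
    IsColimit (Cofan.mk A fun i => ofElem (b i)) :=
  Cofan.IsColimit.mk _ (fun t => lift b fun i => (t.inj i).hom generator)
    (fun t i => by rw [cofan_mk_inj, ofElem_comp, lift_apply, ← eq_ofElem])
    (fun t m hm => hom_ext_basis b fun i => by
      rw [lift_apply, ← hm i, cofan_mk_inj, ofElem_comp, ofElem_apply_generator])

/-- The opposite of this map is the subtraction `G × G ⟶ G` of an abelian group object `G`. -/
noncomputable def sub : rankOne ⟶ free 2 := ofElem (stdBasis 2 0 - stdBasis 2 1)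

end FreeAbFG

open FreeAbFG

section Extension

variable {C : Type u} [Category.{v} C] {ι κ : Type*} [Finite ι] [Finite κ] {A B : FreeAbFG}

noncomputable def isLimitFanMapOfBasis (H : FreeAbFGᵒᵖ ⥤ C) [PreservesFiniteProducts H]
    (b : Module.Basis ι ℤ A.obj) :
    IsLimit (Fan.mk (H.obj (op A)) fun i => H.map (ofElem (b i)).op) :=
  isLimitFanMkObjOfIsLimit H _ _ (Cofan.IsColimit.op (isColimitCofanOfBasis b))

variable {X X' G : FreeAbFGᵒᵖ ⥤ C} [PreservesFiniteProducts G]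
  (ψ : X.obj (op rankOne) ⟶ G.obj (op rankOne))

lemma hom_ext_of_comp_map_ofElem (b : Module.Basis ι ℤ A.obj) {Y : C}
    {f g : Y ⟶ G.obj (op A)}
    (h : ∀ i, f ≫ G.map (ofElem (b i)).op = g ≫ G.map (ofElem (b i)).op) : f = g :=
  Fan.IsLimit.hom_ext (isLimitFanMapOfBasis G b) f g h

noncomputable def extend (b : Module.Basis ι ℤ A.obj) : X.obj (op A) ⟶ G.obj (op A) :=
  Fan.IsLimit.lift (isLimitFanMapOfBasis G b) fun i => X.map (ofElem (b i)).op ≫ ψ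

@[simp]
lemma extend_comp_map_ofElem (b : Module.Basis ι ℤ A.obj) (i : ι) :
    extend ψ b ≫ G.map (ofElem (b i)).op = X.map (ofElem (b i)).op ≫ ψ :=
  Fan.IsLimit.fac (isLimitFanMapOfBasis G b) _ i

lemma extend_rankOneBasis : extend ψ rankOneBasis = ψ :=
  hom_ext_of_comp_map_ofElem rankOneBasis fun i => by
    rw [extend_comp_map_ofElem, Subsingleton.elim i 0]
    simp

lemma app_comp_extend (ρ : X' ⟶ X) (b : Module.Basis ι ℤ A.obj) :
    ρ.app (op A) ≫ extend ψ b = extend (ρ.app (op rankOne) ≫ ψ) b :=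
  hom_ext_of_comp_map_ofElem b fun i => by simp

lemma extend_app (α : X ⟶ G) (b : Module.Basis ι ℤ A.obj) :
    extend (α.app (op rankOne)) b = α.app (op A) :=
  hom_ext_of_comp_map_ofElem b fun i => by simp

lemma map_comp_extend (u : B ⟶ A) (c : Module.Basis κ ℤ B.obj) (b : Module.Basis ι ℤ A.obj)
    (hu : ∀ k, X.map (ofElem (u.hom (c k))).op ≫ ψ
      = extend ψ b ≫ G.map (ofElem (u.hom (c k))).op) :
    X.map u.op ≫ extend ψ c = extend ψ b ≫ G.map u.op :=
  hom_ext_of_comp_map_ofElem c fun k => by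
    rw [Category.assoc, extend_comp_map_ofElem, ← Functor.map_comp_assoc, ← op_comp,
      Category.assoc, ← Functor.map_comp, ← op_comp, ofElem_comp, hu]

def CommutesWithSub : Prop :=
  X.map sub.op ≫ ψ = extend ψ (stdBasis 2) ≫ G.map sub.op

lemma commutesWithSub_app (α : X ⟶ G) : CommutesWithSub (α.app (op rankOne)) := by
  rw [CommutesWithSub, extend_app]
  exact α.naturality sub.op

lemma commutesWithSub_comp_iff (ρ : X' ⟶ X) :
    CommutesWithSub (ρ.app (op rankOne) ≫ ψ) ↔
      ρ.app (op (free 2)) ≫ X.map sub.op ≫ ψ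
        = ρ.app (op (free 2)) ≫ extend ψ (stdBasis 2) ≫ G.map sub.op := by
  rw [CommutesWithSub, ← app_comp_extend, ← ρ.naturality_assoc, Category.assoc]

variable {ψ}

lemma map_ofElem_comp_of_map_comp_extend (u : B ⟶ A) (c : Module.Basis κ ℤ B.obj)
    (b : Module.Basis ι ℤ A.obj) (hu : X.map u.op ≫ extend ψ c = extend ψ b ≫ G.map u.op)
    {x : B.obj} (hx : X.map (ofElem x).op ≫ ψ = extend ψ c ≫ G.map (ofElem x).op) :
    X.map (ofElem (u.hom x)).op ≫ ψ = extend ψ b ≫ G.map (ofElem (u.hom x)).op := by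
  rw [← ofElem_comp, op_comp, Functor.map_comp, Functor.map_comp, Category.assoc, hx,
    reassoc_of% hu]

/-- `ψ(0) = ψ(0 - 0) = ψ(0) - ψ(0) = 0`. -/
lemma CommutesWithSub.map_ofElem_zero (h : CommutesWithSub ψ) :
    X.map (ofElem (0 : (free 0).obj)).op ≫ ψ
      = extend ψ (stdBasis 0) ≫ G.map (ofElem (0 : (free 0).obj)).op := by
  set z := ofElem (0 : (free 0).obj)
  let δ : free 2 ⟶ rankOne := lift (stdBasis 2) fun _ => generator
  let ι₁ : free 0 ⟶ rankOne := lift (stdBasis 0) Fin.elim0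
  have hz : (sub ≫ δ) ≫ z = z := by
    simp only [z, sub, ofElem_comp]
    congr 1
    funext i
    exact i.elim0
  have hδ : sub ≫ δ = z ≫ ι₁ := by simp [z, sub, δ]
  have hδψ : X.map δ.op ≫ extend ψ (stdBasis 2) = ψ ≫ G.map δ.op := by
    rw [map_comp_extend ψ δ (stdBasis 2) rankOneBasis (fun k => by simp [δ, extend_rankOneBasis]),
      extend_rankOneBasis]
  have hι : X.map z.op ≫ ψ ≫ G.map ι₁.op = extend ψ (stdBasis 0) :=
    hom_ext_of_comp_map_ofElem (stdBasis 0) (fun i => i.elim0)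
  calc X.map z.op ≫ ψ = X.map z.op ≫ X.map δ.op ≫ X.map sub.op ≫ ψ := by
        simp only [← Functor.map_comp_assoc, ← op_comp, hz]
    _ = X.map z.op ≫ ψ ≫ G.map (sub ≫ δ).op := by
        rw [h, reassoc_of% hδψ, op_comp, Functor.map_comp]
    _ = extend ψ (stdBasis 0) ≫ G.map z.op := by
        rw [hδ, op_comp, Functor.map_comp, ← hι, Category.assoc, Category.assoc]

lemma CommutesWithSub.map_ofElem_comp (h : CommutesWithSub ψ) (b : Module.Basis ι ℤ A.obj)
    (a : A.obj) : X.map (ofElem a).op ≫ ψ = extend ψ b ≫ G.map (ofElem a).op := by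
  let S : AddSubgroup A.obj := AddSubgroup.ofSub
    {a | X.map (ofElem a).op ≫ ψ = extend ψ b ≫ G.map (ofElem a).op}
    ⟨0, by
      let u : free 0 ⟶ A := lift (stdBasis 0) Fin.elim0
      simpa [u] using map_ofElem_comp_of_map_comp_extend u (stdBasis 0) b
        (map_comp_extend ψ u _ b (fun k => k.elim0)) h.map_ofElem_zero⟩
    (fun a ha a' ha' => by
      let u : free 2 ⟶ A := lift (stdBasis 2) ![a, a']
      have hu : X.map u.op ≫ extend ψ (stdBasis 2) = extend ψ b ≫ G.map u.op :=
        map_comp_extend ψ u _ b (fun k => by fin_cases k <;> simpa [u])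
      simpa [u, sub_eq_add_neg] using map_ofElem_comp_of_map_comp_extend u _ b hu h)
  have hS : Submodule.span ℤ (Set.range b) ≤ S.toIntSubmodule :=
    Submodule.span_le.mpr (by rintro _ ⟨i, rfl⟩; exact (extend_comp_map_ofElem ψ b i).symm)
  exact hS (b.span_eq ▸ Submodule.mem_top : a ∈ Submodule.span ℤ (Set.range b))

noncomputable def CommutesWithSub.toNatTrans (h : CommutesWithSub ψ) : X ⟶ G where
  app A := extend ψ A.unop.basis
  naturality _ _ u := map_comp_extend ψ u.unop _ _ fun _ => h.map_ofElem_comp _ _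

lemma CommutesWithSub.toNatTrans_app_rankOne (h : CommutesWithSub ψ) :
    h.toNatTrans.app (op rankOne) = ψ := by
  change extend ψ rankOne.basis = ψ
  simpa using (h.map_ofElem_comp rankOne.basis generator).symm

lemma natTrans_ext_of_app_rankOne {α β : X ⟶ G}
    (h : α.app (op rankOne) = β.app (op rankOne)) : α = β := by
  ext A
  exact hom_ext_of_comp_map_ofElem A.unop.basis fun i => by simp only [← NatTrans.naturality, h]

end Extension

section Cocompact

variable {D : Type u} [Category.{v} D] {G : D} (hG : IsCocompact.{w} G)
  {J : Type w} [SmallCategory J] [IsCofiltered J] {K : J ⥤ D} {c : Cone K} (hc : IsLimit c)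
include hG hc

lemma IsCocompact.exists_comp_eq (φ : c.pt ⟶ G) :
    ∃ (j : J) (ψ : K.obj j ⟶ G), c.π.app j ≫ ψ = φ := by
  have : HasLimit K := ⟨⟨⟨c, hc⟩⟩⟩
  obtain ⟨ht⟩ := hG J _ inferInstance K this
  let e := hc.conePointUniqueUpToIso (limit.isLimit K)
  obtain ⟨j, ψ, hψ⟩ := Types.jointly_surjective_of_isColimit ht (e.inv ≫ φ)
  have he : e.hom ≫ limit.π K j.unop = c.π.app j.unop :=
    hc.conePointUniqueUpToIso_hom_comp (limit.isLimit K) j.unop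
  have hψ' : limit.π K j.unop ≫ ψ = e.inv ≫ φ := hψ
  exact ⟨j.unop, ψ, by rw [← he, Category.assoc, hψ', e.hom_inv_id_assoc]⟩

lemma IsCocompact.exists_map_comp_eq {j : J} (s₁ s₂ : K.obj j ⟶ G)
    (h : c.π.app j ≫ s₁ = c.π.app j ≫ s₂) :
    ∃ (k : J) (f : k ⟶ j), K.map f ≫ s₁ = K.map f ≫ s₂ := by
  have : HasLimit K := ⟨⟨⟨c, hc⟩⟩⟩
  obtain ⟨ht⟩ := hG J _ inferInstance K this
  have he : (hc.conePointUniqueUpToIso (limit.isLimit K)).inv ≫ c.π.app j = limit.π K j :=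
    hc.conePointUniqueUpToIso_inv_comp (limit.isLimit K) j
  have hπ : limit.π K j ≫ s₁ = limit.π K j ≫ s₂ := by
    rw [← he, Category.assoc, Category.assoc, h]
  obtain ⟨k, f, hf⟩ := (Types.FilteredColimit.isColimit_eq_iff' ht (i := op j) s₁ s₂).mp hπ
  exact ⟨k.unop, f.unop, hf⟩

end Cocompact

section Limits

variable {C : Type u} [Category.{v} C] {J : Type w} [SmallCategory J]

lemma preservesFiniteProducts_limit {E : Type*} [Category E] [HasLimitsOfShape J C]
    (K : J ⥤ E ⥤ C) [∀ j, PreservesFiniteProducts (K.obj j)] :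
    PreservesFiniteProducts (limit K) where
  preserves n := by
    have : PreservesLimitsOfShape (Discrete (Fin n)) K.flip :=
      preservesLimitsOfShape_of_evaluation _ _ fun j =>
        preservesLimitsOfShape_of_natIso (flipCompEvaluation K j).symm
    exact preservesLimitsOfShape_of_natIso (limitIsoFlipCompLim K).symm

noncomputable def isLimitMapConeEval [HasLimitsOfSize.{w, w} C] (F : J ⥤ AbObj C) [HasLimit F]
    (A : FreeAbFG) :
    IsLimit ((ObjectProperty.ι _ ⋙ (evaluation FreeAbFGᵒᵖ C).obj (op A)).mapCone
      (limit.cone F)) :=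
  have (j : J) : PreservesFiniteProducts ((F ⋙ ObjectProperty.ι _).obj j) :=
    (F.obj j).property.some
  have := createsLimitFullSubcategoryInclusion F ⟨preservesFiniteProducts_limit _⟩
  isLimitOfPreserves _ (limit.isLimit F)

end Limits

theorem cocompact_in_abelian_group_objects
    -- `C` is a complete category
    (C : Type u) [Category.{v} C] [HasLimitsOfSize.{w, w} C]
    -- `G` is an abelian group object of `C`
    (G : AbObj C)
    -- whose underlying object `G(ℤ)` is cocompact in `C`
    (h1 : IsCocompact.{w} (G.obj.obj (op rankOne))) :
    -- then `G` is cocompact as an object of `Ab(C)`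
    IsCocompact.{w} G := by
  intro J _ _ F _
  have : PreservesFiniteProducts G.obj := G.property.some
  have hc := isLimitMapConeEval F
  refine ⟨Types.FilteredColimit.isColimitOf' _ _ (fun φ => ?_) (fun j χ χ' h => ?_)⟩
  · obtain ⟨j₀, ψ₀, hψ₀ : (limit.π F j₀).hom.app (op rankOne) ≫ ψ₀ = φ.hom.app (op rankOne)⟩ :=
      h1.exists_comp_eq (hc rankOne) (φ.hom.app (op rankOne))
    have hsub := commutesWithSub_app φ.hom
    rw [← hψ₀, commutesWithSub_comp_iff] at hsub
    obtain ⟨j₁, f, hf⟩ := h1.exists_map_comp_eq (hc (free 2)) _ _ hsub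
    have hsub₁ : CommutesWithSub ((F.map f).hom.app (op rankOne) ≫ ψ₀) :=
      (commutesWithSub_comp_iff _ _).mpr hf
    refine ⟨op j₁, ObjectProperty.homMk hsub₁.toNatTrans,
      ObjectProperty.hom_ext _ (natTrans_ext_of_app_rankOne ?_)⟩
    change φ.hom.app _ = (limit.π F j₁).hom.app _ ≫ hsub₁.toNatTrans.app _
    rw [hsub₁.toNatTrans_app_rankOne, ← hψ₀, ← limit.w F f,
      ObjectProperty.FullSubcategory.comp_hom, NatTrans.comp_app, Category.assoc]
  · obtain ⟨k, f, hf⟩ := h1.exists_map_comp_eq (hc rankOne) (χ.hom.app _) (χ'.hom.app _)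
      (congrArg (fun φ => φ.hom.app (op rankOne)) h)
    exact ⟨op k, f.op, ObjectProperty.hom_ext _ (natTrans_ext_of_app_rankOne hf)⟩
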